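/- For m ≤ n-4, k ≤ n-3 with n ≥ 5, letting x = 0^m 1 0^{n-m-3} 1 1, x̃ = 0^m 1 0^{n-m-4} 1 0 0, y_k = 0^k, and ỹ_k = 0^{k-1} 1, one has ω_{y_k}(x) < ω_{y_k}(x̃) and ω_{ỹ_k}(x) > ω_{ỹ_k}(x̃). -/

import Mathlib

/-!
Counting embeddings by their last letter gives the recursion
`ω_{t a}(l a) = ω_{t a}(l) + ω_t(l)`, while a letter that does not end the pattern adds nothing.
Hence `ω_{0^k}(l) = C(z, k)` where `z` is the number of zeros of `l`, and each `1` appended to `l`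
adds `C(z, j)` to `ω_{0^j 1}(l)`.
Both strings share the prefix `p = 0^m 1 0^{n-m-4}` with `n - 4` zeros and end in `011` and
`100` respectively: the second has one more zero, so more embeddings of `0^k`, while the first
gains `2 C(n-3, k-1)` embeddings of `0^{k-1} 1` against `C(n-4, k-1)` for the second.
-/

namespace List

variable {α : Type*} [BEq α] [LawfulBEq α]

theorem count_sublists_concat_self (l t : List α) (a : α) :
    (l ++ [a]).sublists.count (t ++ [a]) = l.sublists.count (t ++ [a]) + l.sublists.count t := by
  rw [sublists_concat, count_append, count_map_of_injective _ _ (append_left_injective [a])]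

theorem count_sublists_concat_of_getLast?_ne (l : List α) {s : List α} {a : α}
    (h : s.getLast? ≠ some a) : (l ++ [a]).sublists.count s = l.sublists.count s := by
  rw [sublists_concat, count_append, Nat.add_eq_left, count_eq_zero]
  intro hs
  obtain ⟨t, -, rfl⟩ := mem_map.mp hs
  simp at h

theorem count_sublists_nil (l : List α) : l.sublists.count [] = 1 := by
  induction l using reverseRecOn with
  | nil => simp
  | append_singleton l a ih => rwa [count_sublists_concat_of_getLast?_ne _ (by simp)]

theorem count_sublists_replicate (l : List α) (a : α) (k : ℕ) :
    l.sublists.count (replicate k a) = (l.count a).choose k := by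
  induction l using reverseRecOn generalizing k with
  | nil => cases k <;> simp [replicate_succ]
  | append_singleton l b ih =>
    by_cases hba : b = a
    · subst hba
      cases k with
      | zero => rw [replicate_zero, count_sublists_nil, Nat.choose_zero_right]
      | succ k =>
        rw [replicate_succ', count_sublists_concat_self, ← replicate_succ', ih, ih,
          count_append, count_singleton_self, Nat.choose_succ_succ', Nat.add_comm]
    · rw [count_sublists_concat_of_getLast?_ne _ (by simp [getLast?_replicate, Ne.symm hba]),
        ih]
      simp [hba]

theorem count_sublists_concat_replicate_append (l : List α) (a b : α) (j : ℕ) :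
    (l ++ [b]).sublists.count (replicate j a ++ [b])
      = l.sublists.count (replicate j a ++ [b]) + (l.count a).choose j := by
  rw [count_sublists_concat_self, count_sublists_replicate]

variable {a b : α}

theorem count_sublists_replicate_lt (hab : a ≠ b) (p : List α) {k : ℕ} (hk1 : 1 ≤ k)
    (hk : k ≤ p.count a + 2) :
    (p ++ [a, b, b]).sublists.count (replicate k a)
      < (p ++ [b, a, a]).sublists.count (replicate k a) := by
  obtain ⟨i, rfl⟩ : ∃ i, k = i + 1 := ⟨k - 1, by omega⟩
  have hc : (p ++ [a, b, b]).count a = p.count a + 1 := by simp [Ne.symm hab]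
  have hc' : (p ++ [b, a, a]).count a = p.count a + 1 + 1 := by simp [Ne.symm hab]
  rw [count_sublists_replicate, count_sublists_replicate, hc, hc',
    Nat.choose_succ_succ' (p.count a + 1) i]
  have := Nat.choose_pos (show i ≤ p.count a + 1 by omega)
  omega

theorem count_sublists_replicate_append_lt (hab : a ≠ b) (p : List α) {j : ℕ}
    (hj : j ≤ p.count a + 1) :
    (p ++ [b, a, a]).sublists.count (replicate j a ++ [b])
      < (p ++ [a, b, b]).sublists.count (replicate j a ++ [b]) := by
  have hlast : (replicate j a ++ [b]).getLast? ≠ some a := by simp [Ne.symm hab]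
  rw [show p ++ [a, b, b] = p ++ [a] ++ [b] ++ [b] by simp,
    show p ++ [b, a, a] = p ++ [b] ++ [a] ++ [a] by simp,
    count_sublists_concat_of_getLast?_ne _ hlast, count_sublists_concat_of_getLast?_ne _ hlast,
    count_sublists_concat_replicate_append, count_sublists_concat_replicate_append,
    count_sublists_concat_replicate_append, count_sublists_concat_of_getLast?_ne _ hlast]
  have hc : (p ++ [a] ++ [b]).count a = p.count a + 1 := by simp [Ne.symm hab]
  have hc' : (p ++ [a]).count a = p.count a + 1 := by simp
  rw [hc, hc']
  have hle := Nat.choose_le_choose j (Nat.le_add_right (p.count a) 1)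
  have hpos := Nat.choose_pos hj
  omega

end List

open List

theorem stmt_4_general (n m k : ℕ) (hm : m + 4 ≤ n) (hk1 : 1 ≤ k)
    (hk : k ≤ n - 3) :
    (((List.replicate m false ++ [true] ++ List.replicate (n - m - 3) false ++
        [true, true]).sublists.count (List.replicate k false))
      < ((List.replicate m false ++ [true] ++ List.replicate (n - m - 4) false ++
        [true, false, false]).sublists.count (List.replicate k false))) ∧
    (((List.replicate m false ++ [true] ++ List.replicate (n - m - 3) false ++
        [true, true]).sublists.count (List.replicate (k - 1) false ++ [true]))
      > ((List.replicate m false ++ [true] ++ List.replicate (n - m - 4) false ++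
        [true, false, false]).sublists.count (List.replicate (k - 1) false ++ [true]))) := by
  set p := replicate m false ++ [true] ++ replicate (n - m - 4) false
  have hx : replicate m false ++ [true] ++ replicate (n - m - 3) false ++ [true, true]
      = p ++ [false, true, true] := by
    rw [show n - m - 3 = n - m - 4 + 1 by omega, replicate_succ']
    simp [p]
  have hp : p.count false = n - 4 := by
    simp only [p, count_append, count_replicate_self, count_singleton, Bool.true_beq,
      Bool.false_eq_true, if_false]
    omega
  rw [hx]
  exact ⟨count_sublists_replicate_lt Bool.false_ne_true p hk1 (by omega),
    count_sublists_replicate_append_lt Bool.false_ne_true p (by omega)⟩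

/-- For `n ≥ 5`, `m ≤ n-4`, `1 ≤ k ≤ n-3`, letting `x = 0^m 1 0^{n-m-3} 1 1`,
`x̃ = 0^m 1 0^{n-m-4} 1 0 0`, `y_k = 0^k` and `ỹ_k = 0^{k-1} 1`, one has
`ω_{y_k}(x) < ω_{y_k}(x̃)` and `ω_{ỹ_k}(x) > ω_{ỹ_k}(x̃)`, where the embedding
number is computed via `List.sublists.count`. -/
theorem stmt_4 (n m k : ℕ) (hn : 5 ≤ n) (hm : m + 4 ≤ n) (hk1 : 1 ≤ k)
    (hk : k ≤ n - 3) :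
    (((List.replicate m false ++ [true] ++ List.replicate (n - m - 3) false ++
        [true, true]).sublists.count (List.replicate k false))
      < ((List.replicate m false ++ [true] ++ List.replicate (n - m - 4) false ++
        [true, false, false]).sublists.count (List.replicate k false))) ∧
    (((List.replicate m false ++ [true] ++ List.replicate (n - m - 3) false ++
        [true, true]).sublists.count (List.replicate (k - 1) false ++ [true]))
      > ((List.replicate m false ++ [true] ++ List.replicate (n - m - 4) false ++
        [true, false, false]).sublists.count (List.replicate (k - 1) false ++ [true]))) :=
  stmt_4_general n m k hm hk1 hk
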